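/- arXiv:2408.03184 — 4 statements merged into one kernel-verified Lean document; each statement's English description precedes it below -/
import Mathlib

section
/- Let a, b be integers with a > 1, b > 1, and gcd(a, b) = 1. Then there exist infinitely many primes p such that a divides p - 1 with gcd(a, (p-1)/a) = 1, and b divides p + 1 with gcd(b, (p+1)/b) = 1. -/
/-
By the Chinese remainder theorem choose `r` with `r ≡ a + 1 (mod a²)` and `r ≡ b - 1 (mod b²)`;
it is coprime to `a²b²`, so Dirichlet's theorem gives infinitely many primes `p ≡ r (mod a²b²)`.
For each of them `p - 1 ≡ a (mod a²)` and `p + 1 ≡ b (mod b²)`, and `n ≡ m (mod m²)` says exactly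
that `n = m k` with `k ≡ 1 (mod m)`, so that `m` is a Hall divisor of `n`.
-/

namespace Nat

theorem Coprime.of_modEq {r s m : ℕ} (h : r ≡ s [MOD m]) (hs : s.Coprime m) : r.Coprime m := by
  rwa [Coprime, h.gcd_eq]

theorem dvd_and_coprime_div_of_modEq_sq {m n : ℕ} (hm : 0 < m) (h : n ≡ m [MOD m ^ 2]) :
    m ∣ n ∧ m.Coprime (n / m) := by
  have hdvd : m ∣ n := (h.dvd_iff (dvd_pow_self m two_ne_zero)).2 dvd_rfl
  have hquot : n / m ≡ 1 [MOD m] := by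
    refine Nat.ModEq.mul_left_cancel' hm.ne' ?_
    rwa [Nat.mul_div_cancel' hdvd, mul_one, ← sq]
  exact ⟨hdvd, (Coprime.of_modEq hquot (coprime_one_left m)).symm⟩

theorem exists_modEq_add_one_sq_and_modEq_sub_one_sq {a b : ℕ} (hb : 0 < b) (hab : a.Coprime b) :
    ∃ r, r ≡ a + 1 [MOD a ^ 2] ∧ r ≡ b - 1 [MOD b ^ 2] ∧ r.Coprime (a ^ 2 * b ^ 2) := by
  obtain ⟨r, hra, hrb⟩ := chineseRemainder (Coprime.pow 2 2 hab) (a + 1) (b - 1)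
  have hsucc : (a + 1).Coprime a := coprime_self_add_left.2 (coprime_one_left a)
  have hpred : (b - 1).Coprime b := (coprime_self_sub_left hb).2 (coprime_one_left b)
  exact ⟨r, hra, hrb,
    (Coprime.of_modEq hra (hsucc.pow_right 2)).mul_right (Coprime.of_modEq hrb (hpred.pow_right 2))⟩

end Nat

theorem infinite_primes_hall_divisor (a b : ℕ) (ha : 1 < a) (hb : 1 < b)
    (hab : Nat.Coprime a b) :
    {p : ℕ | p.Prime ∧ a ∣ (p - 1) ∧ Nat.Coprime a ((p - 1) / a) ∧
      b ∣ (p + 1) ∧ Nat.Coprime b ((p + 1) / b)}.Infinite := by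
  obtain ⟨r, hra, hrb, hr⟩ := Nat.exists_modEq_add_one_sq_and_modEq_sub_one_sq (by omega) hab
  refine (Nat.infinite_setOfPred_prime_and_modEq (by positivity) hr).mono ?_
  rintro p ⟨hp, hpr⟩
  have hpa : p - 1 ≡ a [MOD a ^ 2] := by
    refine Nat.ModEq.add_right_cancel' 1 ?_
    rw [Nat.sub_add_cancel hp.one_le]
    exact (hpr.of_mul_right _).trans hra
  have hpb : p + 1 ≡ b [MOD b ^ 2] := by
    have := ((hpr.of_mul_left _).trans hrb).add_right 1
    rwa [Nat.sub_add_cancel (by omega)] at this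
  obtain ⟨hadvd, hacop⟩ := Nat.dvd_and_coprime_div_of_modEq_sq (by omega) hpa
  obtain ⟨hbdvd, hbcop⟩ := Nat.dvd_and_coprime_div_of_modEq_sq (by omega) hpb
  exact ⟨hp, hadvd, hacop, hbdvd, hbcop⟩
end

section
/- Let m ≥ 2 be a positive integer and ξ an integer with gcd(ξ, m) = 1. Then there exist infinitely many primes p such that p ≡ ξ (mod m) and gcd(m, (p - ξ)/m) = 1. -/
/-! Choose primes `p ≡ ξ + m (mod m²)`, which Dirichlet's theorem provides since `ξ + m` is
coprime to `m`. Then `(p - ξ) / m ≡ 1 (mod m)`, so it is coprime to `m`. -/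

theorem Int.infinite_setOf_prime_and_modEq {q : ℕ} {a : ℤ} (hq : q ≠ 0) (h : IsCoprime a q) :
    {p : ℕ | p.Prime ∧ (p : ℤ) ≡ a [ZMOD q]}.Infinite :=
  Set.infinite_of_forall_exists_gt fun n ↦ by
    obtain ⟨p, hpn, hp⟩ := Nat.forall_exists_prime_gt_and_zmodEq n hq h
    exact ⟨p, hp, hpn⟩

theorem exists_eq_mul_isCoprime_of_sq_dvd_sub_add {R : Type*} [CommRing R] {m a b : R}
    (h : m ^ 2 ∣ a - (b + m)) : ∃ x, a - b = m * x ∧ IsCoprime m x := by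
  obtain ⟨k, hk⟩ := h
  exact ⟨1 + m * k, by linear_combination hk, isCoprime_one_right.add_mul_left_right k⟩

theorem infinite_primes_cong_with_coprime_quotient (m : ℕ) (hm : 2 ≤ m) (ξ : ℤ)
    (hξ : IsCoprime ξ (m : ℤ)) :
    {p : ℕ | p.Prime ∧ ∃ x : ℤ, (p : ℤ) - ξ = (m : ℤ) * x ∧ IsCoprime (m : ℤ) x}.Infinite := by
  have hshift : IsCoprime (ξ + m) ((m ^ 2 : ℕ) : ℤ) := by
    rw [Nat.cast_pow]
    simpa using (hξ.add_mul_right_left 1).pow_right (n := 2)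
  refine (Int.infinite_setOf_prime_and_modEq (pow_ne_zero 2 (by omega)) hshift).mono ?_
  rintro p ⟨hp, hmod⟩
  exact ⟨hp, exists_eq_mul_isCoprime_of_sq_dvd_sub_add (by exact_mod_cast hmod.symm.dvd)⟩
end

section
/- For an odd integer q with q > 3, the number 24 is a Hall divisor of (q² - 1)/2 if and only if q² ≡ 49 (mod 288) or q² ≡ 241 (mod 288). -/
/-!
Since `q` is odd, `q² = 8m + 1` and `(q² - 1)/2 = 4m`. Then `24 ∣ 4m` iff `m = 6j`, and `24` is
coprime to `j` iff `j ≡ ±1 (mod 6)`, i.e. `m ≡ 6, 30 (mod 36)`, i.e. `q² ≡ 49, 241 (mod 288)`.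
-/

theorem Nat.coprime_twentyFour_iff (n : ℕ) : Nat.Coprime 24 n ↔ n % 6 = 1 ∨ n % 6 = 5 := by
  rw [show 24 = 2 ^ 3 * 3 by norm_num, Nat.coprime_mul_iff_left,
    Nat.coprime_pow_left_iff (by norm_num), Nat.coprime_two_left,
    Nat.prime_three.coprime_iff_not_dvd, Nat.odd_iff]
  omega

theorem hall_divisor_24_iff_general (q : ℕ) (hq : Odd q) :
    (24 ∣ (q ^ 2 - 1) / 2 ∧ Nat.Coprime 24 (((q ^ 2 - 1) / 2) / 24)) ↔
      (q ^ 2 % 288 = 49 ∨ q ^ 2 % 288 = 241) := by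
  have h8 : 8 ∣ q ^ 2 - 1 := Nat.eight_dvd_sq_sub_one_of_odd hq
  have hpos : 0 < q ^ 2 := pow_pos hq.pos 2
  rw [Nat.coprime_twentyFour_iff]
  omega

theorem hall_divisor_24_iff (q : ℕ) (hq : Odd q) (hq3 : 3 < q) :
    (24 ∣ (q ^ 2 - 1) / 2 ∧ Nat.Coprime 24 (((q ^ 2 - 1) / 2) / 24)) ↔
      (q ^ 2 % 288 = 49 ∨ q ^ 2 % 288 = 241) :=
  hall_divisor_24_iff_general q hq
end

section
/- For an odd integer q with q > 5, the number 60 is a Hall divisor of (q² - 1)/2 if and only if q² ≡ 120k + 1 (mod 3600) for some k ∈ {1, 7, 11, 13, 17, 19, 23, 29}. -/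
/-!
Write `n = (q² - 1) / 2`. Since `60 = 2² · 15`, the divisor `60` of `n = 60 j` is a Hall divisor
exactly when `j` is prime to `30`, i.e. when `j mod 30` is one of the eight reduced residues
`1, 7, …, 29`. As `q` is odd, `q² = 2n + 1`, so `q² mod 3600` equals `2 (n mod 1800) + 1`, and
`n mod 1800 = 60 (j mod 30)`.
-/

open Nat

theorem coprime_mul_left_iff_of_dvd {a b n : ℕ} (h : a ∣ b) :
    Coprime (a * b) n ↔ Coprime b n :=
  ⟨Coprime.coprime_mul_left, fun hb => coprime_mul_iff_left.mpr ⟨hb.coprime_dvd_left h, hb⟩⟩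

theorem filter_coprime_thirty :
    (Finset.range 30).filter (Coprime · 30) = {1, 7, 11, 13, 17, 19, 23, 29} := by
  decide

theorem coprime_sixty_iff (j : ℕ) :
    Coprime 60 j ↔ j % 30 ∈ ({1, 7, 11, 13, 17, 19, 23, 29} : Finset ℕ) := by
  rw [show 60 = 2 * 30 from rfl, coprime_mul_left_iff_of_dvd (by norm_num), ← filter_coprime_thirty,
    Finset.mem_filter, ZMod.coprime_mod_iff_coprime, coprime_comm]
  exact (and_iff_right (Finset.mem_range.mpr (mod_lt j (by norm_num)))).symm

theorem dvd_and_coprime_sixty_div_iff (n : ℕ) :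
    (60 ∣ n ∧ Coprime 60 (n / 60)) ↔
      ∃ k ∈ ({1, 7, 11, 13, 17, 19, 23, 29} : Finset ℕ), n % 1800 = 60 * k := by
  constructor
  · rintro ⟨⟨j, rfl⟩, hj⟩
    rw [mul_div_cancel_left₀ j (by norm_num), coprime_sixty_iff] at hj
    exact ⟨j % 30, hj, mul_mod_mul_left 60 j 30⟩
  · rintro ⟨k, hk, hn⟩
    have hdvd : 60 ∣ n := by omega
    refine ⟨hdvd, (coprime_sixty_iff _).mpr ?_⟩
    rwa [show n / 60 % 30 = k by omega]

theorem hall_divisor_60_iff_general (q : ℕ) (hq : Odd q) :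
    (60 ∣ (q ^ 2 - 1) / 2 ∧ Nat.Coprime 60 (((q ^ 2 - 1) / 2) / 60)) ↔
      (∃ k ∈ ({1, 7, 11, 13, 17, 19, 23, 29} : Finset ℕ),
        q ^ 2 % 3600 = (120 * k + 1) % 3600) := by
  have hsq : q ^ 2 % 2 = 1 := odd_iff.mp hq.pow
  rw [dvd_and_coprime_sixty_div_iff]
  refine exists_congr fun k => and_congr_right fun hk => ?_
  have hk30 : k < 30 := by
    simp only [Finset.mem_insert, Finset.mem_singleton] at hk
    omega
  omega

theorem hall_divisor_60_iff (q : ℕ) (hq : Odd q) (hq5 : 5 < q) :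
    (60 ∣ (q ^ 2 - 1) / 2 ∧ Nat.Coprime 60 (((q ^ 2 - 1) / 2) / 60)) ↔
      (∃ k ∈ ({1, 7, 11, 13, 17, 19, 23, 29} : Finset ℕ),
        q ^ 2 % 3600 = (120 * k + 1) % 3600) :=
  hall_divisor_60_iff_general q hq
end
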